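/- arXiv:2510.15469 — 6 statements merged into one kernel-verified Lean document; each statement's English description precedes it below -/
import Mathlib

section
/- Let G be a free group, g a primitive element of G (i.e. g belongs to some free basis of G), H a subgroup of G, and k > 0 an integer such that g^k ∈ H but g^i ∉ H for all 1 ≤ i ≤ k−1. Then g^k is a primitive element of the free group H. -/
noncomputable section
open scoped Classical
open CategoryTheory CategoryTheory.ActionCategory CategoryTheory.SingleObj Quiver FreeGroup
open IsFreeGroupoid IsFreeGroupoid.SpanningTree

namespace MyNS

universe u



variable {Γ : Type u} [Groupoid.{u} Γ] [IsFreeGroupoid Γ]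
  (T : WideSubquiver (Symmetrify <| IsFreeGroupoid.Generators Γ)) [Arborescence T]

def myRoot : Γ := show T from root T

/-- Copy of `IsFreeGroupoid.SpanningTree.endIsFree`, but producing a `FreeGroupBasis`. -/
lemma treeHom_myRoot : treeHom T (myRoot T) = 𝟙 (myRoot T) := treeHom_root T

def treeBasis : FreeGroupBasis
    ((wideSubquiverEquivSetTotal <| wideSubquiverSymmetrify T)ᶜ : Set _)
    (End (myRoot T)) :=
  FreeGroupBasis.ofUniqueLift ((wideSubquiverEquivSetTotal <| wideSubquiverSymmetrify T)ᶜ : Set _)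
    (fun e => loopOfHom T (of e.val.hom))
    (by
      intro X _ f
      let f' : Labelling (IsFreeGroupoid.Generators Γ) X := fun a b e =>
        if h : e ∈ wideSubquiverSymmetrify T a b then 1 else f ⟨⟨a, b, e⟩, h⟩
      rcases unique_lift f' with ⟨F', hF', uF'⟩
      refine ⟨F'.mapEnd _, ?_, ?_⟩
      · suffices ∀ {x y} (q : x ⟶ y), F'.map (loopOfHom T q) = (F'.map q : X) by
          rintro ⟨⟨a, b, e⟩, h⟩
          erw [Functor.mapEnd_apply, this, hF']
          exact dif_neg h
        intros x y q
        suffices ∀ {a} (p : Path (root T) a), F'.map (homOfPath T p) = 1 by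
          simp only [this, treeHom, comp_as_mul, inv_as_inv, loopOfHom, inv_one, mul_one,
            one_mul, Functor.map_inv, Functor.map_comp]
          erw [this, this, inv_one, one_mul, mul_one]
        intro a p
        induction' p with b c p e ih
        · rw [homOfPath]; exact F'.map_id _
        show F'.map (homOfPath T p ≫ _) = 1
        refine (F'.map_comp _ _).trans ?_
        rw [comp_as_mul, ih, mul_one]
        rcases e with ⟨e | e, eT⟩
        · refine (hF' _ _ e).trans ?_
          exact dif_pos (Or.inl eT)
        · refine (@Functor.map_inv _ _ _ _ F' _ _ (IsFreeGroupoid.of e) (IsIso.of_groupoid _)).trans ?_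
          rw [inv_as_inv, inv_eq_one]; refine (hF' _ _ e).trans ?_
          exact dif_pos (Or.inr eT)
      · intro E hE
        ext x
        have key : (functorOfMonoidHom T E).map x = F'.map x := by
          congr
          apply uF'
          intro a b e
          change E (loopOfHom T _) = dite _ _ _
          split_ifs with h
          · rw [loopOfHom_eq_id T e h, ← End.one_def]; exact E.map_one
          · exact hE ⟨⟨a, b, e⟩, h⟩
        have hL : loopOfHom T x = x := by
          have h2 : (𝟙 (myRoot T)) ≫ x ≫ inv (𝟙 (myRoot T)) = x := by simp
          show treeHom T (myRoot T) ≫ x ≫ inv (treeHom T (myRoot T)) = x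
          rw [treeHom_myRoot]
          exact h2
        change E (loopOfHom T x) = _ at key; rw [hL] at key
        exact key)

lemma treeBasis_apply (e) : treeBasis T e = loopOfHom T (of e.val.hom) := by
  show (FreeGroup.lift (fun e => loopOfHom T (IsFreeGroupoid.of e.val.hom))) (FreeGroup.of e) = _
  exact FreeGroup.lift_apply_of


section App

variable {ι : Type} (H : Subgroup (FreeGroup ι))

lemma fg_unique_lift {X : Type} [Group X] (f : ι → X) :
    ∃! F : FreeGroup ι →* X, ∀ a, F (FreeGroup.of a) = f a := by
  refine ⟨FreeGroup.lift f, fun a => FreeGroup.lift_apply_of, fun F hF => ?_⟩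
  ext a
  simp [hF a]

instance (priority := 2000) myFreeGroupoid :
    IsFreeGroupoid (ActionCategory (FreeGroup ι) (FreeGroup ι ⧸ H)) where
  quiverGenerators :=
    ⟨fun a b => { e : ι // FreeGroup.of e • a.back = b.back }⟩
  of := fun e => ⟨FreeGroup.of e.val, e.property⟩
  unique_lift := by
    intro X _ f
    let f' : ι → (FreeGroup ι ⧸ H → X) ⋊[mulAutArrow] FreeGroup ι := fun e =>
      ⟨fun b => @f ⟨(), _⟩ ⟨(), b⟩ ⟨e, smul_inv_smul _ b⟩, FreeGroup.of e⟩
    rcases fg_unique_lift f' with ⟨F', hF', uF'⟩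
    refine ⟨uncurry F' ?_, ?_, ?_⟩
    · suffices SemidirectProduct.rightHom.comp F' = MonoidHom.id _ by
        exact DFunLike.ext_iff.mp this
      apply FreeGroup.ext_hom
      intro x
      rw [MonoidHom.comp_apply, hF']
      rfl
    · rintro ⟨⟨⟩, a⟩ ⟨⟨⟩, b⟩ ⟨e, h⟩
      change (F' (FreeGroup.of _)).left _ = _
      rw [hF']
      cases inv_smul_eq_iff.mpr h.symm
      rfl
    · intro E hE
      have : curry E = F' := by
        apply uF'
        intro e
        ext
        · convert! hE _ _ _
          rfl
        · rfl
      apply Functor.hext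
      · intro
        apply Unit.ext
      · refine ActionCategory.cases ?_
        intros
        subst this
        rfl

/-- The root vertex: the coset `H`. -/
def rt : ActionCategory (FreeGroup ι) (FreeGroup ι ⧸ H) :=
  objEquiv (FreeGroup ι) (FreeGroup ι ⧸ H) ((1 : FreeGroup ι) : FreeGroup ι ⧸ H)

variable (i₀ : ι)

/-- The vertices `g^j • H`. -/
def vtx : ℕ → ActionCategory (FreeGroup ι) (FreeGroup ι ⧸ H)
  | 0 => rt H
  | j+1 => objEquiv (FreeGroup ι) (FreeGroup ι ⧸ H) (FreeGroup.of i₀ • (vtx j).back)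

lemma vtx_back (j : ℕ) :
    (vtx H i₀ j).back = ((FreeGroup.of i₀ ^ j : FreeGroup ι) : FreeGroup ι ⧸ H) := by
  induction j with
  | zero => rw [pow_zero]; rfl
  | succ j ih =>
      show FreeGroup.of i₀ • (vtx H i₀ j).back = _
      rw [ih, MulAction.Quotient.smul_mk, smul_eq_mul, ← pow_succ']

abbrev sv (x : ActionCategory (FreeGroup ι) (FreeGroup ι ⧸ H)) :
    Symmetrify (Generators (ActionCategory (FreeGroup ι) (FreeGroup ι ⧸ H))) := x

variable (k : ℕ)

lemma vtx_inj (hnot : ∀ i : ℕ, 1 ≤ i → i ≤ k - 1 → (FreeGroup.of i₀ : FreeGroup ι) ^ i ∉ H)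
    {i j : ℕ} (hi : i < k) (hj : j < k) (h : vtx H i₀ i = vtx H i₀ j) : i = j := by
  have hb : ((FreeGroup.of i₀ ^ i : FreeGroup ι) : FreeGroup ι ⧸ H)
      = ((FreeGroup.of i₀ ^ j : FreeGroup ι) : FreeGroup ι ⧸ H) := by
    rw [← vtx_back, ← vtx_back, h]
  by_contra hne
  -- wlog i < j
  rcases Nat.lt_or_ge i j with hij | hij
  · have : (FreeGroup.of i₀ : FreeGroup ι) ^ (j - i) ∈ H := by
      have := QuotientGroup.eq.mp hb
      have e : (FreeGroup.of i₀ ^ i : FreeGroup ι)⁻¹ * FreeGroup.of i₀ ^ j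
          = FreeGroup.of i₀ ^ (j - i) := by
        rw [show (FreeGroup.of i₀ ^ j : FreeGroup ι) = FreeGroup.of i₀ ^ i * FreeGroup.of i₀ ^ (j - i) by rw [← pow_add]; congr 1; omega, inv_mul_cancel_left]
      rwa [e] at this
    exact hnot (j - i) (by omega) (by omega) this
  · have hij' : j < i := by omega
    have : (FreeGroup.of i₀ : FreeGroup ι) ^ (i - j) ∈ H := by
      have := QuotientGroup.eq.mp hb.symm
      have e : (FreeGroup.of i₀ ^ j : FreeGroup ι)⁻¹ * FreeGroup.of i₀ ^ i
          = FreeGroup.of i₀ ^ (i - j) := by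
        rw [show (FreeGroup.of i₀ ^ i : FreeGroup ι) = FreeGroup.of i₀ ^ j * FreeGroup.of i₀ ^ (i - j) by rw [← pow_add]; congr 1; omega, inv_mul_cancel_left]
      rwa [e] at this
    exact hnot (i - j) (by omega) (by omega) this

lemma reach (hk : 0 < k) (x : ActionCategory (FreeGroup ι) (FreeGroup ι ⧸ H)) :
    ∃ n, ∃ j, j < k ∧ ∃ p : Path (sv H (vtx H i₀ j)) (sv H x), p.length = n := by
  have hne : Nonempty (Path (sv H (rt H)) (sv H x)) :=
    (@generators_connected (ActionCategory (FreeGroup ι) (FreeGroup ι ⧸ H)) _ instIsConnectedOfIsPretransitiveOfNonempty _ (rt H)).nonempty_path x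
  obtain ⟨p⟩ := hne
  exact ⟨p.length, 0, hk, ⟨show Path (sv H (vtx H i₀ 0)) (sv H x) from p, rfl⟩⟩

/-- Distance from the forced path. -/
def D (hk : 0 < k) (x : ActionCategory (FreeGroup ι) (FreeGroup ι ⧸ H)) : ℕ :=
  Nat.find (reach H i₀ k hk x)

/-- Height function for the arborescence. -/
def height (hk : 0 < k) (x : ActionCategory (FreeGroup ι) (FreeGroup ι ⧸ H)) : ℕ :=
  if h : ∃ j, j < k ∧ x = vtx H i₀ j then Nat.find h else k + D H i₀ k hk x

lemma vtx_zero : vtx H i₀ 0 = rt H := rfl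

lemma forced_pf (hk : 0 < k) (x : ActionCategory (FreeGroup ι) (FreeGroup ι ⧸ H))
    (hx : x ≠ rt H) (h : ∃ j, j < k ∧ x = vtx H i₀ j) :
    (FreeGroup.of i₀ : FreeGroup ι) • (vtx H i₀ (Nat.find h - 1)).back = x.back := by
  have hm := Nat.find_spec h
  have hm0 : Nat.find h ≠ 0 := by
    intro h0
    exact hx (by rw [hm.2, h0, vtx_zero])
  conv_rhs => rw [hm.2, (Nat.succ_pred_eq_of_pos (Nat.pos_of_ne_zero hm0)).symm]
  rfl

lemma forced_lt (hk : 0 < k) (x : ActionCategory (FreeGroup ι) (FreeGroup ι ⧸ H))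
    (hx : x ≠ rt H) (h : ∃ j, j < k ∧ x = vtx H i₀ j) :
    height H i₀ k hk (vtx H i₀ (Nat.find h - 1)) < height H i₀ k hk x := by
  have hm := Nat.find_spec h
  have hm0 : Nat.find h ≠ 0 := by
    intro h0
    exact hx (by rw [hm.2, h0, vtx_zero])
  have h' : ∃ j, j < k ∧ vtx H i₀ (Nat.find h - 1) = vtx H i₀ j :=
    ⟨Nat.find h - 1, lt_of_le_of_lt (Nat.pred_le _) hm.1, rfl⟩
  rw [height, dif_pos h', height, dif_pos h]
  exact lt_of_le_of_lt (Nat.find_min' h' ⟨lt_of_le_of_lt (Nat.pred_le _) hm.1, rfl⟩)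
    (Nat.sub_lt (Nat.pos_of_ne_zero hm0) one_pos)

/-- Parent data at a forced vertex. -/
def forcedData (hk : 0 < k) (x : ActionCategory (FreeGroup ι) (FreeGroup ι ⧸ H))
    (hx : x ≠ rt H) (h : ∃ j, j < k ∧ x = vtx H i₀ j) :
    Σ' (p : ActionCategory (FreeGroup ι) (FreeGroup ι ⧸ H)),
      Σ' (_e : sv H p ⟶ sv H x), height H i₀ k hk p < height H i₀ k hk x :=
  ⟨vtx H i₀ (Nat.find h - 1), Sum.inl ⟨i₀, forced_pf H i₀ k hk x hx h⟩,
    forced_lt H i₀ k hk x hx h⟩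

lemma forcedData_snd (hk : 0 < k) (x : ActionCategory (FreeGroup ι) (FreeGroup ι ⧸ H))
    (hx : x ≠ rt H) (h : ∃ j, j < k ∧ x = vtx H i₀ j) :
    (forcedData H i₀ k hk x hx h).2.1
      = Sum.inl ⟨i₀, forced_pf H i₀ k hk x hx h⟩ := rfl

lemma nonforced_exists (hk : 0 < k) (x : ActionCategory (FreeGroup ι) (FreeGroup ι ⧸ H))
    (h : ¬ ∃ j, j < k ∧ x = vtx H i₀ j) :
    Nonempty (Σ' (p : ActionCategory (FreeGroup ι) (FreeGroup ι ⧸ H)),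
      Σ' (_e : sv H p ⟶ sv H x), height H i₀ k hk p < height H i₀ k hk x) := by
  obtain ⟨j, hj, p, hp⟩ : ∃ j, j < k ∧ ∃ p : Path (sv H (vtx H i₀ j)) (sv H x),
      p.length = D H i₀ k hk x := Nat.find_spec (reach H i₀ k hk x)
  cases p with
  | nil => exact absurd ⟨j, hj, rfl⟩ h
  | cons q e =>
      rename_i c
      refine ⟨⟨c, e, ?_⟩⟩
      simp only [height]
      rw [dif_neg h]
      by_cases hc : ∃ j', j' < k ∧ (show ActionCategory (FreeGroup ι) (FreeGroup ι ⧸ H) from c)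
          = vtx H i₀ j'
      · rw [dif_pos hc]
        exact lt_of_lt_of_le (Nat.find_spec hc).1 (Nat.le_add_right _ _)
      · rw [dif_neg hc]
        have h1 : D H i₀ k hk c ≤ q.length := Nat.find_min' (reach H i₀ k hk c) ⟨j, hj, q, rfl⟩
        have h2 : q.length + 1 = D H i₀ k hk x := hp
        omega

/-- The parent function. -/
def par (hk : 0 < k) (x : ActionCategory (FreeGroup ι) (FreeGroup ι ⧸ H)) (hx : x ≠ rt H) :
    Σ' (p : ActionCategory (FreeGroup ι) (FreeGroup ι ⧸ H)),
      Σ' (_e : sv H p ⟶ sv H x), height H i₀ k hk p < height H i₀ k hk x :=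
  if h : ∃ j, j < k ∧ x = vtx H i₀ j then forcedData H i₀ k hk x hx h
  else Classical.choice (nonforced_exists H i₀ k hk x h)

/-- The spanning tree. -/
def Tr (hk : 0 < k) :
    WideSubquiver (Symmetrify (Generators (ActionCategory (FreeGroup ι) (FreeGroup ι ⧸ H)))) :=
  fun a x => {e | ∃ hx : (x : ActionCategory (FreeGroup ι) (FreeGroup ι ⧸ H)) ≠ rt H,
    ∃ _hp : (par H i₀ k hk x hx).1 = a, HEq (par H i₀ k hk x hx).2.1 e}

/-- The arborescence structure on the spanning tree. -/
@[reducible]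
def arb (hk : 0 < k) : Arborescence (Tr H i₀ k hk : Type) :=
  arborescenceMk (rt H) (height H i₀ k hk)
    (by
      rintro a x ⟨e, hx, hp, -⟩
      have := (par H i₀ k hk x hx).2.2
      rwa [hp] at this)
    (by
      rintro a b c ⟨e, hxc, hpa, ha⟩ ⟨f, hxc', hpb, hb⟩
      obtain rfl : a = b := hpa.symm.trans hpb
      refine ⟨rfl, heq_of_eq ?_⟩
      exact Subtype.ext (eq_of_heq (ha.symm.trans hb))
    )
    (by
      intro x
      by_cases hx : x = rt H
      · exact Or.inl hx
      · exact Or.inr ⟨(par H i₀ k hk x hx).1, ⟨⟨(par H i₀ k hk x hx).2.1, hx, rfl, HEq.rfl⟩⟩⟩)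

lemma find_forced (hnot : ∀ i : ℕ, 1 ≤ i → i ≤ k - 1 → (FreeGroup.of i₀ : FreeGroup ι) ^ i ∉ H)
    (m : ℕ) (hm : m < k) (h : ∃ j, j < k ∧ vtx H i₀ m = vtx H i₀ j) : Nat.find h = m := by
  have hs := Nat.find_spec h
  exact vtx_inj H i₀ k hnot hs.1 hm hs.2.symm

lemma heq_edge {n m l : ℕ} (hnm : n = m)
    (pf1 : (FreeGroup.of i₀ : FreeGroup ι) • (vtx H i₀ n).back = (vtx H i₀ l).back)
    (pf2 : (FreeGroup.of i₀ : FreeGroup ι) • (vtx H i₀ m).back = (vtx H i₀ l).back) :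
    HEq (Sum.inl ⟨i₀, pf1⟩ : sv H (vtx H i₀ n) ⟶ sv H (vtx H i₀ l))
      (Sum.inl ⟨i₀, pf2⟩ : sv H (vtx H i₀ m) ⟶ sv H (vtx H i₀ l)) := by
  subst hnm; rfl

lemma no_inl_inr {P P' Q : ActionCategory (FreeGroup ι) (FreeGroup ι ⧸ H)} (h : P = P')
    (x : @Quiver.Hom (Generators (ActionCategory (FreeGroup ι) (FreeGroup ι ⧸ H))) _ P Q)
    (y : @Quiver.Hom (Generators (ActionCategory (FreeGroup ι) (FreeGroup ι ⧸ H))) _ Q P') :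
    ¬ HEq (Sum.inl x : sv H P ⟶ sv H Q) (Sum.inr y : sv H P' ⟶ sv H Q) := by
  subst h
  intro hh
  have := eq_of_heq hh
  cases this

lemma edge_mem_Tr (hk : 0 < k)
    (hnot : ∀ i : ℕ, 1 ≤ i → i ≤ k - 1 → (FreeGroup.of i₀ : FreeGroup ι) ^ i ∉ H)
    (j : ℕ) (hj : j + 1 < k) :
    (Sum.inl ⟨i₀, rfl⟩ : sv H (vtx H i₀ j) ⟶ sv H (vtx H i₀ (j+1)))
      ∈ Tr H i₀ k hk (vtx H i₀ j) (vtx H i₀ (j+1)) := by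
  have hx : vtx H i₀ (j+1) ≠ rt H := by
    intro hEq
    have : j + 1 = 0 := vtx_inj H i₀ k hnot hj hk (hEq.trans (vtx_zero H i₀).symm)
    omega
  have h : ∃ j', j' < k ∧ vtx H i₀ (j+1) = vtx H i₀ j' := ⟨j+1, hj, rfl⟩
  have hpar : par H i₀ k hk _ hx = forcedData H i₀ k hk _ hx h := dif_pos h
  have hf : Nat.find h - 1 = j := by
    rw [find_forced H i₀ k hnot _ hj h]
    omega
  refine ⟨hx, ?_, ?_⟩
  · rw [hpar]
    show vtx H i₀ (Nat.find h - 1) = vtx H i₀ j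
    rw [hf]
  · rw [hpar, forcedData_snd]
    exact @heq_edge ι H i₀ (Nat.find h - 1) j (j+1) hf _ rfl

/-- The path in the tree from the root to `vtx j`. -/
def treePath (hk : 0 < k)
    (hnot : ∀ i : ℕ, 1 ≤ i → i ≤ k - 1 → (FreeGroup.of i₀ : FreeGroup ι) ^ i ∉ H) :
    (j : ℕ) → j + 1 ≤ k → @Path (Tr H i₀ k hk : Type) _ (rt H) (vtx H i₀ j)
  | 0, _ => Path.nil
  | j+1, hj => (treePath hk hnot j (by omega)).cons
      ⟨Sum.inl ⟨i₀, rfl⟩, edge_mem_Tr H i₀ k hk hnot j hj⟩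

/-- The morphism `g^j` from the root to `vtx j`. -/
def mor (j : ℕ) : rt H ⟶ (vtx H i₀ j : ActionCategory (FreeGroup ι) (FreeGroup ι ⧸ H)) :=
  ⟨FreeGroup.of i₀ ^ j, by
    show (FreeGroup.of i₀ ^ j : FreeGroup ι) • ((1 : FreeGroup ι) : FreeGroup ι ⧸ H)
        = (vtx H i₀ j).back
    rw [MulAction.Quotient.smul_mk, smul_eq_mul, mul_one, vtx_back]⟩

lemma homOfPath_treePath (hk : 0 < k)
    (hnot : ∀ i : ℕ, 1 ≤ i → i ≤ k - 1 → (FreeGroup.of i₀ : FreeGroup ι) ^ i ∉ H)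
    (j : ℕ) (hj : j + 1 ≤ k) :
    @homOfPath _ _ _ (Tr H i₀ k hk) (arb H i₀ k hk) _ (treePath H i₀ k hk hnot j hj)
      = mor H i₀ j := by
  induction j with
  | zero =>
      refine Subtype.ext ?_
      show (1 : FreeGroup ι) = FreeGroup.of i₀ ^ 0
      rw [pow_zero]
  | succ n ih =>
      rw [treePath]
      show @homOfPath _ _ _ (Tr H i₀ k hk) (arb H i₀ k hk) _ (treePath H i₀ k hk hnot n (by omega)) ≫ _ = _
      rw [ih (by omega)]
      refine Subtype.ext ?_
      show FreeGroup.of i₀ * FreeGroup.of i₀ ^ n = FreeGroup.of i₀ ^ (n+1)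
      rw [← pow_succ']

/-- The special edge from `vtx (k-1)` back to the root. -/
def e0 (hk : 0 < k) (hmem : (FreeGroup.of i₀ : FreeGroup ι) ^ k ∈ H) :
    @Quiver.Hom (Generators (ActionCategory (FreeGroup ι) (FreeGroup ι ⧸ H))) _
      (vtx H i₀ (k-1)) (rt H) :=
  ⟨i₀, by
    show (FreeGroup.of i₀ : FreeGroup ι) • (vtx H i₀ (k-1)).back
        = ((1 : FreeGroup ι) : FreeGroup ι ⧸ H)
    rw [vtx_back, MulAction.Quotient.smul_mk]
    have : (FreeGroup.of i₀ : FreeGroup ι) • FreeGroup.of i₀ ^ (k-1) = FreeGroup.of i₀ ^ k := by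
      rw [smul_eq_mul, ← pow_succ']
      congr 1
      omega
    rw [this]
    exact QuotientGroup.eq.mpr (by simpa using inv_mem hmem)⟩

lemma e0_not_mem (hk : 0 < k)
    (hnot : ∀ i : ℕ, 1 ≤ i → i ≤ k - 1 → (FreeGroup.of i₀ : FreeGroup ι) ^ i ∉ H)
    (hmem : (FreeGroup.of i₀ : FreeGroup ι) ^ k ∈ H) :
    e0 H i₀ k hk hmem ∉ wideSubquiverSymmetrify (Tr H i₀ k hk) (vtx H i₀ (k-1)) (rt H) := by
  rintro (⟨hx, -, -⟩ | ⟨hx, hp, heq⟩)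
  · exact hx rfl
  · by_cases hk1 : k = 1
    · subst hk1
      exact hx (vtx_zero H i₀)
    · have h : ∃ j, j < k ∧ vtx H i₀ (k-1) = vtx H i₀ j := ⟨k-1, by omega, rfl⟩
      have hpar : par H i₀ k hk _ hx = forcedData H i₀ k hk _ hx h := dif_pos h
      rw [hpar] at hp heq
      erw [forcedData_snd] at heq
      exact no_inl_inr H hp _ _ heq

lemma master (hk : 0 < k)
    (hmem : (FreeGroup.of i₀ : FreeGroup ι) ^ k ∈ H)
    (hnot : ∀ i, 1 ≤ i → i ≤ k - 1 → (FreeGroup.of i₀ : FreeGroup ι) ^ i ∉ H) :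
    ∃ (κ : Type) (bb : FreeGroupBasis κ ↥H),
      (⟨FreeGroup.of i₀ ^ k, hmem⟩ : H) ∈ Set.range bb := by
  letI : Arborescence (Tr H i₀ k hk : Type) := arb H i₀ k hk
  refine ⟨_, (treeBasis (Tr H i₀ k hk)).map (endMulEquivSubgroup H), ?_⟩
  refine ⟨⟨⟨vtx H i₀ (k-1), rt H, e0 H i₀ k hk hmem⟩, e0_not_mem H i₀ k hk hnot hmem⟩, ?_⟩
  erw [FreeGroupBasis.map_apply, treeBasis_apply]
  refine Subtype.ext ?_
  show (loopOfHom (Tr H i₀ k hk) (IsFreeGroupoid.of (e0 H i₀ k hk hmem))).val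
      = FreeGroup.of i₀ ^ k
  have ht1 : treeHom (Tr H i₀ k hk) (vtx H i₀ (k-1)) = mor H i₀ (k-1) :=
    (treeHom_eq (Tr H i₀ k hk) (a := vtx H i₀ (k-1)) (treePath H i₀ k hk hnot (k-1) (by omega))).trans
      (homOfPath_treePath H i₀ k hk hnot (k-1) (by omega))
  have ht0 : treeHom (Tr H i₀ k hk) (rt H) = 𝟙 (rt H) :=
    (treeHom_eq _ Path.nil).trans rfl
  have hinv : @inv _ _ _ _ (treeHom (Tr H i₀ k hk) (rt H)) (IsIso.of_groupoid _) = 𝟙 (rt H) :=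
    @IsIso.inv_eq_of_hom_inv_id _ _ _ _ _ (IsIso.of_groupoid _) _ ((Category.comp_id _).trans (ht0.trans rfl))
  rw [loopOfHom, ht1]
  erw [hinv, ActionCategory.comp_val, ActionCategory.comp_val]
  show ((1 : FreeGroup ι) * FreeGroup.of i₀) * FreeGroup.of i₀ ^ (k-1) = FreeGroup.of i₀ ^ k
  rw [one_mul, ← pow_succ']
  congr 1
  omega

end App

end MyNS

/-- An element of a group is *primitive* if it belongs to some free basis. -/
def IsPrimitiveElement {G : Type} [Group G] (g : G) : Prop :=
  ∃ (ι : Type) (b : FreeGroupBasis ι G), g ∈ Set.range b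

/-- Let `G` be a free group, `g` a primitive element of `G`, `H` a subgroup and `k > 0`
such that `g ^ k ∈ H` but `g ^ i ∉ H` for `1 ≤ i ≤ k - 1`. Then `g ^ k` is a primitive
element of the free group `H`. -/
theorem primitive_pow_primitive_in_subgroup {G : Type} [Group G] [IsFreeGroup G]
    (g : G) (hg : IsPrimitiveElement g) (H : Subgroup G) (k : ℕ) (hk : 0 < k)
    (hmem : g ^ k ∈ H) (hnot : ∀ i : ℕ, 1 ≤ i → i ≤ k - 1 → g ^ i ∉ H) :
    IsPrimitiveElement (⟨g ^ k, hmem⟩ : H) := by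
  obtain ⟨ιb, bb, i₀, hi⟩ := hg
  subst hi
  have hbe : bb.repr (bb i₀) = FreeGroup.of i₀ := bb.repr_apply_coe i₀
  set H' : Subgroup (FreeGroup ιb) := Subgroup.map (bb.repr : G →* FreeGroup ιb) H with hH'
  have hmem' : (FreeGroup.of i₀ : FreeGroup ιb) ^ k ∈ H' := by
    rw [← hbe, ← map_pow]
    exact ⟨_, hmem, rfl⟩
  have hnot' : ∀ i, 1 ≤ i → i ≤ k - 1 → (FreeGroup.of i₀ : FreeGroup ιb) ^ i ∉ H' := by
    intro i h1 h2 hmemi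
    apply hnot i h1 h2
    rw [← hbe, ← map_pow] at hmemi
    obtain ⟨y, hy, hxy⟩ := hmemi
    have hyy : y = bb i₀ ^ i := bb.repr.injective hxy
    rwa [← hyy]
  obtain ⟨κ, bB, idx, hidx⟩ := MyNS.master H' i₀ k hk hmem' hnot'
  refine ⟨κ, bB.map (bb.repr.subgroupMap H).symm, idx, ?_⟩
  rw [FreeGroupBasis.map_apply, hidx, MulEquiv.subgroupMap_symm_apply]
  refine Subtype.ext ?_
  show bb.repr.symm ((FreeGroup.of i₀ : FreeGroup ιb) ^ k) = bb i₀ ^ k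
  rw [← hbe, ← map_pow, MulEquiv.symm_apply_apply]
end
end

section
/- Let θ be an injective endomorphism of a free group F and w ∈ F a nonidentity element that is not a proper power, with θ(w) = w^d for some integer |d| ≥ 2. If u ∈ F satisfies θ(u) = w^j for some integer j with 1 ≤ j ≤ |d| − 1, then a contradiction follows; in other words, none of w, w^2, …, w^{|d|−1} lies in the image θ(F). -/
/-- Let `θ` be an injective endomorphism of a free group `F` and `w ≠ 1` not a proper
power, with `θ w = w ^ d` for `|d| ≥ 2`.  Then no element `u` of `F` satisfies
`θ u = w ^ j` with `1 ≤ j ≤ |d| - 1`; i.e. none of `w, w², …, w^{|d|-1}` lies in the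
image of `θ`. -/
theorem no_small_power_in_image {F : Type} [Group F] [IsFreeGroup F]
    (θ : F →* F) (hθ : Function.Injective θ) (w : F) (hw : w ≠ 1)
    (hnp : ∀ (x : F) (m : ℕ), 2 ≤ m → w ≠ x ^ m)
    (d : ℤ) (hd : 2 ≤ |d|) (hrel : θ w = w ^ d)
    (u : F) (j : ℤ) (hj1 : 1 ≤ j) (hj2 : j ≤ |d| - 1) (hu : θ u = w ^ j) :
    False := by
  have hd0 : d ≠ 0 := by
    intro h; rw [h] at hd; simp at hd
  -- g = gcd d j
  set g : ℤ := (Int.gcd d j : ℤ) with hg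
  have hgpos : 0 < g := by
    rw [hg]
    exact_mod_cast Int.gcd_pos_of_ne_zero_left j hd0
  have hgd : g ∣ d := Int.gcd_dvd_left d j
  have hgj : g ∣ j := Int.gcd_dvd_right d j
  have hgle : g ≤ j := Int.le_of_dvd (by omega) hgj
  -- Bezout: w ^ g is in the range of θ
  set a := Int.gcdA d j
  set b := Int.gcdB d j
  have hbez : g = d * a + j * b := Int.gcd_eq_gcd_ab d j
  have hv : θ (w ^ a * u ^ b) = w ^ g := by
    rw [map_mul, map_zpow, map_zpow, hrel, hu, ← zpow_mul, ← zpow_mul,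
      ← zpow_add, hbez]
  set v := w ^ a * u ^ b with hvdef
  -- e = d / g, so that d = g * e and |e| ≥ 2
  obtain ⟨e, hde⟩ := hgd
  have habs : |d| = g * |e| := by
    rw [hde, abs_mul, abs_of_pos hgpos]
  have he2 : 2 ≤ |e| := by nlinarith [abs_nonneg e]
  -- θ w = θ (v ^ e), hence w = v ^ e
  have hweq : w = v ^ e := by
    apply hθ
    rw [map_zpow, hv, ← zpow_mul, ← hde, hrel]
  -- turn the integer power into a natural power and contradict hnp
  rcases le_or_gt 0 e with hepos | heneg
  · have : w = v ^ e.toNat := by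
      rw [hweq, ← zpow_natCast, Int.toNat_of_nonneg hepos]
    exact hnp v e.toNat (by rw [abs_of_nonneg hepos] at he2; omega) this
  · have : w = (v⁻¹) ^ (-e).toNat := by
      rw [← zpow_natCast, Int.toNat_of_nonneg (by omega), inv_zpow', neg_neg]
      exact hweq
    exact hnp v⁻¹ (-e).toNat (by rw [abs_of_neg heneg] at he2; omega) this
end

section
/- Let G be a group that is boundedly generated by elements c₁, …, c_n with word bound N, i.e. every g ∈ G can be written g = c_{i_1}^{m_1} ⋯ c_{i_N}^{m_N} with each i_j ∈ {1, …, n} and m_j ∈ ℤ. If q is a homogeneous quasimorphism on G with q(c₁) = ⋯ = q(c_n) = 0, then q is identically zero on G. -/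
/-!
A quasimorphism is additive up to the defect `D` on each product, so on a product of `N`
elements it differs from the sum of its values by at most `D * N`. If `q` vanishes on the
generators it vanishes, by homogeneity, on all their powers, hence `|q| ≤ D * N` on the whole
group. A bounded homogeneous function is zero, since `k * |q g| = |q (g ^ k)|` stays bounded.
-/

section Quasimorphism

variable {M : Type*} [Monoid M] {q : M → ℝ}

theorem abs_map_list_prod_sub_sum_le {D : ℝ} (h1 : q 1 = 0)
    (hD : ∀ g h : M, |q (g * h) - q g - q h| ≤ D) (L : List M) :
    |q L.prod - (L.map q).sum| ≤ D * L.length := by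
  induction L with
  | nil => simp [h1]
  | cons a t ih =>
    calc |q (a * t.prod) - (q a + (t.map q).sum)|
        = |(q (a * t.prod) - q a - q t.prod) + (q t.prod - (t.map q).sum)| := by ring_nf
      _ ≤ D + D * t.length := (abs_add_le _ _).trans (add_le_add (hD _ _) ih)
      _ = D * (a :: t).length := by push_cast [List.length_cons]; ring

theorem eq_zero_of_abs_le_of_map_pow {C : ℝ} (hhom : ∀ (g : M) (k : ℕ), q (g ^ k) = k * q g)
    (hbdd : ∀ g, |q g| ≤ C) (g : M) : q g = 0 := by
  by_contra hne
  have hpos : 0 < |q g| := abs_pos.mpr hne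
  obtain ⟨k, hk⟩ := exists_nat_gt (C / |q g|)
  have hpow : |q (g ^ k)| = k * |q g| := by
    rw [hhom, abs_mul, Nat.abs_cast]
  have := hbdd (g ^ k)
  rw [hpow] at this
  linarith [(div_lt_iff₀ hpos).mp hk]

end Quasimorphism

/-- If `G` is boundedly generated by `c₁, …, c_n` with word bound `N` and `q` is a
homogeneous quasimorphism vanishing on each `cᵢ`, then `q` is identically zero. -/
theorem homogeneous_quasimorphism_vanishing_on_bounded_generators {G : Type} [Group G]
    (n N : ℕ) (c : Fin n → G)
    (hbg : ∀ g : G, ∃ (i : Fin N → Fin n) (m : Fin N → ℤ),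
      g = (List.ofFn fun j => c (i j) ^ m j).prod)
    (q : G → ℝ)
    (hqm : ∃ D : ℝ, 0 ≤ D ∧ ∀ g h : G, |q (g * h) - q g - q h| ≤ D)
    (hhom : ∀ (g : G) (k : ℤ), q (g ^ k) = k * q g)
    (hzero : ∀ i : Fin n, q (c i) = 0) :
    ∀ g : G, q g = 0 := by
  obtain ⟨D, -, hD⟩ := hqm
  have hq1 : q 1 = 0 := by simpa using hhom 1 0
  have hbdd : ∀ g : G, |q g| ≤ D * N := by
    intro g
    obtain ⟨i, m, rfl⟩ := hbg g
    simpa [Function.comp_def, hhom, hzero] using abs_map_list_prod_sub_sum_le hq1 hD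
      (List.ofFn fun j => c (i j) ^ m j)
  refine eq_zero_of_abs_le_of_map_pow (fun g k => ?_) hbdd
  exact_mod_cast hhom g k
end

section
/- If a group G is boundedly generated and the real vector space of homogeneous quasimorphisms on G has dimension at least n+1 where n is the number of bounded generators, then a contradiction follows. Consequently, a group with an infinite-dimensional space of homogeneous quasimorphisms is not boundedly generated. -/
/-!
Restricting to the generators is a linear map from `Q_h(G)` to `ℝⁿ`, so `n + 1` linearly
independent homogeneous quasimorphisms admit a nonzero combination `φ` vanishing on every `cᵢ`.
By homogeneity `φ` vanishes on every power `cᵢ ^ m`, so on a product of `N` such powers it is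
bounded by `N` times its defect. A bounded homogeneous quasimorphism is zero, since
`|φ (g ^ k)| = k |φ g|`; this contradicts linear independence.
-/

/-- `q` is a homogeneous quasimorphism. -/
def IsHomogeneousQuasimorphism {G : Type} [Group G] (q : G → ℝ) : Prop :=
  (∃ D : ℝ, 0 ≤ D ∧ ∀ g h : G, |q (g * h) - q g - q h| ≤ D) ∧
  (∀ (g : G) (n : ℤ), q (g ^ n) = n * q g)

/-- `G` is boundedly generated: there are `c₁, …, c_n` and `N` such that every element
is a product of `N` powers of the `cᵢ`. -/
def BoundedlyGenerated (G : Type) [Group G] : Prop :=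
  ∃ (n N : ℕ) (c : Fin n → G), ∀ g : G, ∃ (i : Fin N → Fin n) (m : Fin N → ℤ),
    g = (List.ofFn fun j => c (i j) ^ m j).prod

open Module

theorem LinearIndependent.exists_mem_span_ne_zero_map_eq_zero {ι K M V : Type*} [Fintype ι]
    [Field K] [AddCommGroup M] [Module K M] [AddCommGroup V] [Module K V] [FiniteDimensional K V]
    {v : ι → M} (hv : LinearIndependent K v) (f : M →ₗ[K] V)
    (hlt : finrank K V < Fintype.card ι) :
    ∃ x ∈ Submodule.span K (Set.range v), x ≠ 0 ∧ f x = 0 := by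
  have hT : ¬ Function.Injective (f ∘ₗ Fintype.linearCombination K v) := fun hinj => by
    simpa using (LinearMap.finrank_le_finrank_of_injective hinj).trans_lt hlt
  rw [injective_iff_map_eq_zero] at hT
  push Not at hT
  obtain ⟨a, hTa, ha⟩ := hT
  have hinj := linearIndependent_iff_injective_fintypeLinearCombination.1 hv
  refine ⟨_, ?_, fun h => ha ((injective_iff_map_eq_zero _).1 hinj a h), hTa⟩
  exact (Submodule.mem_span_range_iff_exists_fun K).2
    ⟨a, (Fintype.linearCombination_apply K v a).symm⟩

theorem abs_map_list_prod_le_mul_length {G : Type*} [Monoid G] {q : G → ℝ} {D : ℝ}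
    (hq₁ : q 1 = 0) (hD : ∀ g h, |q (g * h) - q g - q h| ≤ D) (L : List G)
    (hL : ∀ x ∈ L, q x = 0) :
    |q L.prod| ≤ D * L.length := by
  induction L with
  | nil => simp [hq₁]
  | cons a t ih =>
    have ha : q a = 0 := hL a List.mem_cons_self
    have ht := ih fun x hx => hL x (List.mem_cons_of_mem a hx)
    calc |q (a * t.prod)| = |(q (a * t.prod) - q a - q t.prod) + q t.prod| := by rw [ha]; ring_nf
      _ ≤ D + D * t.length := (abs_add_le _ _).trans (add_le_add (hD a t.prod) ht)
      _ = D * (a :: t).length := by simp only [List.length_cons]; push_cast; ring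

def homogeneousQuasimorphisms (G : Type) [Group G] : Submodule ℝ (G → ℝ) where
  carrier := {q | IsHomogeneousQuasimorphism q}
  zero_mem' := ⟨⟨0, le_rfl, by simp⟩, by simp⟩
  add_mem' := by
    rintro q r ⟨⟨D, hD₀, hD⟩, hq⟩ ⟨⟨E, hE₀, hE⟩, hr⟩
    refine ⟨⟨D + E, add_nonneg hD₀ hE₀, fun g h => ?_⟩,
      fun g n => by simp [hq, hr, mul_add]⟩
    calc |(q + r) (g * h) - (q + r) g - (q + r) h|
        = |(q (g * h) - q g - q h) + (r (g * h) - r g - r h)| := by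
          simp only [Pi.add_apply]; ring_nf
      _ ≤ D + E := (abs_add_le _ _).trans (add_le_add (hD g h) (hE g h))
  smul_mem' := by
    rintro a q ⟨⟨D, hD₀, hD⟩, hq⟩
    refine ⟨⟨|a| * D, by positivity, fun g h => ?_⟩, fun g n => by simp [hq, mul_left_comm]⟩
    calc |(a • q) (g * h) - (a • q) g - (a • q) h|
        = |a| * |q (g * h) - q g - q h| := by
          simp only [Pi.smul_apply, smul_eq_mul, ← abs_mul]; ring_nf
      _ ≤ |a| * D := mul_le_mul_of_nonneg_left (hD g h) (abs_nonneg a)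

namespace IsHomogeneousQuasimorphism

variable {G : Type} [Group G] {q : G → ℝ}

theorem map_one (hq : IsHomogeneousQuasimorphism q) : q 1 = 0 := by
  simpa using hq.2 1 0

theorem eq_zero_of_abs_le (hq : IsHomogeneousQuasimorphism q) {C : ℝ} (hC : ∀ g, |q g| ≤ C) :
    q = 0 := by
  funext g
  by_contra hg
  have hpos : 0 < |q g| := abs_pos.2 hg
  obtain ⟨k, hk⟩ := exists_nat_gt (C / |q g|)
  have hpow : |q (g ^ (k : ℤ))| = k * |q g| := by
    rw [hq.2, abs_mul, Int.cast_natCast, Nat.abs_cast]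
  have := hC (g ^ (k : ℤ))
  rw [hpow] at this
  linarith [(div_lt_iff₀ hpos).1 hk]

theorem eq_zero_of_forall_eq_prod_zpow (hq : IsHomogeneousQuasimorphism q) {n N : ℕ}
    {c : Fin n → G} (hc : ∀ i, q (c i) = 0)
    (hgen : ∀ g : G, ∃ (i : Fin N → Fin n) (m : Fin N → ℤ),
      g = (List.ofFn fun j => c (i j) ^ m j).prod) :
    q = 0 := by
  obtain ⟨D, -, hD⟩ := hq.1
  refine hq.eq_zero_of_abs_le (C := D * N) fun g => ?_
  obtain ⟨i, m, rfl⟩ := hgen g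
  have hvanish : ∀ x ∈ List.ofFn (fun j => c (i j) ^ m j), q x = 0 := by
    simp [List.mem_ofFn, hq.2, hc]
  simpa using abs_map_list_prod_le_mul_length hq.map_one hD _ hvanish

end IsHomogeneousQuasimorphism

theorem not_linearIndependent_of_forall_eq_prod_zpow {G : Type} [Group G] {n N : ℕ}
    {c : Fin n → G}
    (hgen : ∀ g : G, ∃ (i : Fin N → Fin n) (m : Fin N → ℤ),
      g = (List.ofFn fun j => c (i j) ^ m j).prod)
    {ι : Type*} [Fintype ι] {q : ι → G → ℝ} (hq : ∀ j, IsHomogeneousQuasimorphism (q j))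
    (hcard : n < Fintype.card ι) :
    ¬ LinearIndependent ℝ q := fun hli => by
  obtain ⟨φ, hφspan, hφ, hφc⟩ :=
    hli.exists_mem_span_ne_zero_map_eq_zero (LinearMap.funLeft ℝ ℝ c) (by simpa using hcard)
  have hφq : φ ∈ homogeneousQuasimorphisms G :=
    Submodule.span_le.2 (Set.range_subset_iff.2 hq) hφspan
  exact hφ (IsHomogeneousQuasimorphism.eq_zero_of_forall_eq_prod_zpow hφq (congrFun hφc) hgen)

/-- If `G` is boundedly generated by `n` elements and the space of homogeneous
quasimorphisms has dimension at least `n + 1`, we get a contradiction.  Consequently a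
group with an infinite-dimensional space of homogeneous quasimorphisms is not boundedly
generated. -/
theorem bounded_generation_vs_quasimorphisms :
    (∀ (G : Type) [Group G] (n N : ℕ) (c : Fin n → G),
      (∀ g : G, ∃ (i : Fin N → Fin n) (m : Fin N → ℤ),
        g = (List.ofFn fun j => c (i j) ^ m j).prod) →
      ∀ q : Fin (n + 1) → G → ℝ,
        (∀ j, IsHomogeneousQuasimorphism (q j)) → LinearIndependent ℝ q → False) ∧
    (∀ (G : Type) [Group G] (q : ℕ → G → ℝ),
      (∀ j, IsHomogeneousQuasimorphism (q j)) → LinearIndependent ℝ q →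
        ¬ BoundedlyGenerated G) := by
  refine ⟨fun G _ n N c hgen q hq =>
      not_linearIndependent_of_forall_eq_prod_zpow hgen hq (by simp), ?_⟩
  rintro G _ q hq hli ⟨n, N, c, hgen⟩
  exact not_linearIndependent_of_forall_eq_prod_zpow hgen (ι := Fin (n + 1)) (fun j => hq j)
    (by simp) (hli.comp Fin.val Fin.val_injective)
end

section
/- Let G be a residually finite group that is not metabelian, and let t, a ∈ G be elements satisfying t a t^{-1} = a^d for some integer d. Then there exists a proper finite index subgroup H of G containing both t and a. -/
section Aux

open scoped commutatorElement

variable {Q : Type*} [Group Q]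

private lemma commute_conj {x y : Q} (g : Q) (h : Commute x y) :
    Commute (g * x * g⁻¹) (g * y * g⁻¹) := by
  have := h.map (MulAut.conj g).toMonoidHom
  simpa using this

private lemma conj_pow_eq (u v : Q) (d : ℤ) (hr : u * v * u⁻¹ = v ^ d) (k : ℕ) :
    u ^ k * v * (u ^ k)⁻¹ = v ^ (d ^ k) := by
  induction k with
  | zero => simp
  | succ k ih =>
    have : u ^ (k + 1) * v * (u ^ (k + 1))⁻¹ = u * (u ^ k * v * (u ^ k)⁻¹) * u⁻¹ := by
      rw [pow_succ']
      group
    rw [this, ih, ← conj_zpow, hr, ← zpow_mul, pow_succ, mul_comm (d ^ k) d]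

/-- Key lemma: a group generated by two elements `u, v` with `u v u⁻¹ = v ^ d`
is metabelian. -/
private lemma derivedSeries_eq_bot_of_gen (u v : Q) (d : ℤ)
    (hr : u * v * u⁻¹ = v ^ d) (hgen : Subgroup.closure {u, v} = ⊤) :
    derivedSeries Q 2 = ⊥ := by
  set s : Set Q := Set.range (fun n : ℤ => u ^ n * v * (u ^ n)⁻¹) with hs
  set A : Subgroup Q := Subgroup.closure s with hA
  -- generators of A commute pairwise
  have hgencomm : ∀ x ∈ s, ∀ y ∈ s, Commute x y := by
    have key : ∀ m n : ℤ, m ≤ n →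
        Commute (u ^ m * v * (u ^ m)⁻¹) (u ^ n * v * (u ^ n)⁻¹) := by
      intro m n hmn
      obtain ⟨k, rfl⟩ : ∃ k : ℕ, n = m + k := ⟨(n - m).toNat, by omega⟩
      have h1 : u ^ (m + (k : ℤ)) * v * (u ^ (m + (k : ℤ)))⁻¹
          = u ^ m * (u ^ k * v * (u ^ k)⁻¹) * (u ^ m)⁻¹ := by
        rw [zpow_add, zpow_natCast]
        group
      rw [h1, conj_pow_eq u v d hr k]
      exact commute_conj (u ^ m) ((Commute.refl v).zpow_right _)
    rintro x ⟨m, rfl⟩ y ⟨n, rfl⟩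
    rcases le_total m n with h | h
    · exact key m n h
    · exact (key n m h).symm
  -- A is abelian
  have step1 : ∀ z ∈ s, ∀ y ∈ A, Commute z y := by
    intro z hz y hy
    exact Subgroup.closure_induction (p := fun y _ => Commute z y)
      (fun w hw => hgencomm z hz w hw) (Commute.one_right z)
      (fun _ _ _ _ => Commute.mul_right) (fun _ _ => Commute.inv_right) hy
  have hAcomm : ∀ x ∈ A, ∀ y ∈ A, Commute x y := by
    intro x hx y hy
    exact Subgroup.closure_induction (p := fun x _ => Commute x y)
      (fun z hz => step1 z hz y hy) (Commute.one_left y)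
      (fun _ _ _ _ => Commute.mul_left) (fun _ _ => Commute.inv_left) hx
  -- conjugation by u and u⁻¹ preserves A
  have hconj : ∀ g : Q, (∀ n : ℤ, g * (u ^ n * v * (u ^ n)⁻¹) * g⁻¹ ∈ s) →
      ∀ x ∈ A, g * x * g⁻¹ ∈ A := by
    intro g hg x hx
    refine Subgroup.closure_induction ?_ (by simpa using A.one_mem)
      (fun y z _ _ hy hz => ?_) (fun y _ hy => ?_) hx
    · rintro y ⟨n, rfl⟩
      exact Subgroup.subset_closure (hg n)
    · have : g * (y * z) * g⁻¹ = (g * y * g⁻¹) * (g * z * g⁻¹) := by group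
      rw [this]; exact A.mul_mem hy hz
    · have : g * y⁻¹ * g⁻¹ = (g * y * g⁻¹)⁻¹ := by group
      rw [this]; exact A.inv_mem hy
  have hu_conj : ∀ x ∈ A, u * x * u⁻¹ ∈ A := by
    refine hconj u (fun n => ⟨n + 1, ?_⟩)
    simp only [zpow_add, zpow_one]
    group
  have huinv_conj : ∀ x ∈ A, u⁻¹ * x * u ∈ A := by
    intro x hx
    have := hconj u⁻¹ (fun n => ⟨n - 1, by simp only [zpow_sub, zpow_one]; group⟩) x hx
    simpa using this
  have hvA : v ∈ A := Subgroup.subset_closure ⟨0, by simp⟩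
  -- A is normal
  have hnorm : A.Normal := by
    rw [← Subgroup.normalizer_eq_top_iff, eq_top_iff, ← hgen, Subgroup.closure_le]
    rintro g (rfl | rfl)
    · rw [SetLike.mem_coe, Subgroup.mem_normalizer_iff]
      intro h
      constructor
      · exact fun hh => hu_conj h hh
      · intro hh
        have := huinv_conj _ hh
        simpa [mul_assoc] using this
    · exact Subgroup.le_normalizer hvA
  -- quotient by A is cyclic, so commutator subgroup ≤ A
  let π := QuotientGroup.mk' A
  have hπ : ∀ g : Q, ∃ n : ℤ, π g = (π u) ^ n := by
    intro g
    have hg : g ∈ Subgroup.closure {u, v} := hgen ▸ Subgroup.mem_top g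
    refine Subgroup.closure_induction ?_ ⟨0, by simp⟩
      (fun y z _ _ ⟨m, hm⟩ ⟨n, hn⟩ => ⟨m + n, by rw [map_mul, hm, hn, zpow_add]⟩)
      (fun y _ ⟨m, hm⟩ => ⟨-m, by rw [map_inv, hm, zpow_neg]⟩) hg
    rintro y (rfl | rfl)
    · exact ⟨1, by simp⟩
    · exact ⟨0, by simpa [π] using (QuotientGroup.eq_one_iff y).mpr hvA⟩
  have hcomm_le : ⁅(⊤ : Subgroup Q), (⊤ : Subgroup Q)⁆ ≤ A := by
    rw [Subgroup.commutator_le]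
    intro g _ h _
    have : π ⁅g, h⁆ = 1 := by
      obtain ⟨m, hm⟩ := hπ g
      obtain ⟨n, hn⟩ := hπ h
      rw [map_commutatorElement, hm, hn, commutatorElement_eq_one_iff_commute]
      exact (Commute.refl (π u)).zpow_zpow m n
    exact (QuotientGroup.eq_one_iff _).mp this
  have hAA : ⁅A, A⁆ ≤ ⊥ := by
    rw [Subgroup.commutator_le]
    intro x hx y hy
    rw [Subgroup.mem_bot, commutatorElement_eq_one_iff_commute]
    exact hAcomm x hx y hy
  rw [show (2 : ℕ) = 1 + 1 from rfl, derivedSeries_succ, derivedSeries_succ,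
    derivedSeries_zero, eq_bot_iff]
  exact le_trans (Subgroup.commutator_mono hcomm_le hcomm_le) hAA

end Aux

/-- Let `G` be residually finite and not metabelian, and let `t, a ∈ G` satisfy
`t a t⁻¹ = a ^ d`.  Then there is a proper finite index subgroup of `G` containing
`t` and `a`. -/
theorem proper_finite_index_subgroup_containing {G : Type} [Group G]
    (hrf : ∀ g : G, g ≠ 1 → ∃ (Q : Type) (_ : Group Q) (_ : Finite Q)
      (f : G →* Q), f g ≠ 1)
    (hnm : derivedSeries G 2 ≠ ⊥)
    (t a : G) (d : ℤ) (hrel : t * a * t⁻¹ = a ^ d) :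
    ∃ H : Subgroup G, H ≠ ⊤ ∧ H.FiniteIndex ∧ t ∈ H ∧ a ∈ H := by
  obtain ⟨⟨γ, hγmem⟩, hγne⟩ := Subgroup.ne_bot_iff_exists_ne_one.mp hnm
  have hγ1 : γ ≠ 1 := by
    exact fun h => hγne (Subtype.ext h)
  obtain ⟨Q, _, _, f, hfγ⟩ := hrf γ hγ1
  -- replace Q by the range of f, so that the map is surjective
  let f' : G →* f.range := f.rangeRestrict
  have hsurj : Function.Surjective f' := f.rangeRestrict_surjective
  have hfin : Finite f.range := Subtype.finite
  have hf'γ : f' γ ≠ 1 := by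
    intro h
    exact hfγ (by simpa [f', Subtype.ext_iff] using h)
  set S : Subgroup f.range := Subgroup.closure {f' t, f' a} with hS
  refine ⟨S.comap f', ?_, ?_, ?_, ?_⟩
  · intro htop
    have hStop : S = ⊤ := by
      exact Subgroup.comap_injective hsurj (htop.trans (Subgroup.comap_top f').symm)
    have hrel' : f' t * f' a * (f' t)⁻¹ = (f' a) ^ d := by
      rw [← map_mul, ← map_inv, ← map_mul, hrel, map_zpow]
    have hbot : derivedSeries f.range 2 = ⊥ :=
      derivedSeries_eq_bot_of_gen (f' t) (f' a) d hrel' hStop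
    have hmem : f' γ ∈ derivedSeries f.range 2 :=
      map_derivedSeries_le_derivedSeries f' 2 ⟨γ, hγmem, rfl⟩
    rw [hbot, Subgroup.mem_bot] at hmem
    exact hf'γ hmem
  · refine ⟨?_⟩
    rw [Subgroup.index_comap_of_surjective _ hsurj]
    exact Subgroup.index_ne_zero_of_finite
  · exact Subgroup.subset_closure (Set.mem_insert _ _)
  · exact Subgroup.subset_closure (Set.mem_insert_of_mem _ rfl)
end

section
/- Let G be the group with presentation ⟨a₁, …, a_n, t | a₁^{l₁} = a₂^{r₁}, a₂^{l₂} = a₃^{r₂}, …, a_n^{l_n} = t a₁^{r_n} t^{-1}⟩ where n ≥ 2 and the integers L = l₁⋯l_n and R = r₁⋯r_n are coprime with all l_i, r_i nonzero. Then G is generated by t and a₁, and the relation t a₁^{R} t^{-1} = a₁^{L} holds in G; hence G is a quotient of the Baumslag–Solitar group BS(R, L). -/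
/-!
Write `a_{n+1} := t a₁ t⁻¹`, so that the relations form one chain `a_i^{l_i} = a_{i+1}^{r_i}`,
`1 ≤ i ≤ n`. Raising to suitable products and telescoping gives
`a_j^{r_i ⋯ r_{j-1}} = a_i^{l_i ⋯ l_{j-1}}` for `i ≤ j`. Taking `(i, j) = (1, n+1)` is the
Baumslag–Solitar relation, and for each `i` the two instances `(1, i)` and `(i, n+1)` put
`a_i^{r_1 ⋯ r_{i-1}}` and `a_i^{l_i ⋯ l_n}` into `⟨t, a₁⟩`; these exponents divide the coprime
integers `R` and `L`, so `a_i ∈ ⟨t, a₁⟩`.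
-/

/-- The Baumslag–Solitar group `BS(m, n) = ⟨t, a | t aᵐ t⁻¹ = aⁿ⟩`, with `t` indexed by
`true` and `a` by `false`. -/
abbrev BS (m n : ℤ) : Type :=
  PresentedGroup ({FreeGroup.of true * (FreeGroup.of false) ^ m * (FreeGroup.of true)⁻¹ *
    (FreeGroup.of false) ^ (-n)} : Set (FreeGroup Bool))

open Finset

section ZpowChain

variable {G : Type*} [Group G]

theorem mem_of_zpow_mem_of_isCoprime {H : Subgroup G} {x : G} {m k : ℤ} (hmk : IsCoprime m k)
    (hm : x ^ m ∈ H) (hk : x ^ k ∈ H) : x ∈ H := by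
  obtain ⟨u, v, huv⟩ := hmk
  have hx : x = (x ^ m) ^ u * (x ^ k) ^ v := by
    rw [← zpow_mul, ← zpow_mul, ← zpow_add, mul_comm m, mul_comm k, huv, zpow_one]
  rw [hx]
  exact mul_mem (zpow_mem hm u) (zpow_mem hk v)

theorem zpow_prod_Ico_eq_of_chain (b : ℕ → G) (l r : ℕ → ℤ) {j k : ℕ} (hjk : j ≤ k)
    (hchain : ∀ i, j ≤ i → i < k → b i ^ l i = b (i + 1) ^ r i) :
    b k ^ ∏ i ∈ Ico j k, r i = b j ^ ∏ i ∈ Ico j k, l i := by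
  induction k, hjk using Nat.le_induction with
  | base => simp
  | succ k hjk ih =>
    rw [prod_Ico_succ_top hjk, prod_Ico_succ_top hjk]
    calc b (k + 1) ^ ((∏ i ∈ Ico j k, r i) * r k)
        = (b (k + 1) ^ r k) ^ ∏ i ∈ Ico j k, r i := by rw [mul_comm, zpow_mul]
      _ = (b k ^ ∏ i ∈ Ico j k, r i) ^ l k := by
        rw [← hchain k hjk (by omega), ← zpow_mul, ← zpow_mul, mul_comm]
      _ = b j ^ ((∏ i ∈ Ico j k, l i) * l k) := by
        rw [ih fun i hji hik => hchain i hji (by omega), zpow_mul]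

variable {b : ℕ → G} {l r : ℕ → ℤ} {n : ℕ} {t : G}
  (hchain : ∀ i < n, b i ^ l i = b (i + 1) ^ r i) (hbn : b n = t * b 0 * t⁻¹)
include hchain hbn

theorem conj_zpow_prod_eq_of_chain :
    t * b 0 ^ (∏ i ∈ range n, r i) * t⁻¹ = b 0 ^ ∏ i ∈ range n, l i := by
  rw [← conj_zpow, ← hbn, range_eq_Ico]
  exact zpow_prod_Ico_eq_of_chain b l r n.zero_le fun i _ hi => hchain i hi

theorem mem_closure_of_chain (hcop : IsCoprime (∏ i ∈ range n, l i) (∏ i ∈ range n, r i))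
    {i : ℕ} (hi : i ≤ n) : b i ∈ Subgroup.closure {t, b 0} := by
  have ht : t ∈ Subgroup.closure {t, b 0} := Subgroup.subset_closure (by simp)
  have hb₀ : b 0 ∈ Subgroup.closure {t, b 0} := Subgroup.subset_closure (by simp)
  refine mem_of_zpow_mem_of_isCoprime (m := ∏ j ∈ Ico i n, l j) (k := ∏ j ∈ range i, r j)
    ?_ ?_ ?_
  · refine (hcop.of_isCoprime_of_dvd_left ?_).of_isCoprime_of_dvd_right ?_
    · exact prod_dvd_prod_of_subset _ _ _ fun j hj => by simp at hj ⊢; omega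
    · exact prod_dvd_prod_of_subset _ _ _ (range_subset_range.2 hi)
  · rw [← zpow_prod_Ico_eq_of_chain b l r hi fun j _ hj => hchain j hj, hbn]
    exact zpow_mem (mul_mem (mul_mem ht hb₀) (inv_mem ht)) _
  · rw [range_eq_Ico, zpow_prod_Ico_eq_of_chain b l r i.zero_le fun j _ hj => hchain j (by omega)]
    exact zpow_mem hb₀ _

end ZpowChain

namespace BS

variable {G : Type*} [Group G] {m k : ℤ}

def lift (t a : G) (h : t * a ^ m * t⁻¹ = a ^ k) : BS m k →* G :=
  PresentedGroup.toGroup (f := fun x => if x then t else a) <| by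
    rintro _ rfl
    simp [h]

theorem lift_surjective {t a : G} (h : t * a ^ m * t⁻¹ = a ^ k) (hcl : Subgroup.closure {t, a} = ⊤) :
    Function.Surjective (lift t a h) := by
  rw [← MonoidHom.range_eq_top, eq_top_iff, ← hcl, Subgroup.closure_le]
  rintro x (rfl | rfl)
  · exact ⟨PresentedGroup.of true, PresentedGroup.toGroup.of _⟩
  · exact ⟨PresentedGroup.of false, PresentedGroup.toGroup.of _⟩

end BS

def extendByConst {α : Type*} {n : ℕ} (f : Fin n → α) (c : α) (j : ℕ) : α :=
  if h : j < n then f ⟨j, h⟩ else c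

theorem prod_extendByConst {M : Type*} [CommMonoid M] {n : ℕ} (f : Fin n → M) :
    ∏ i ∈ range n, extendByConst f 1 i = ∏ i, f i :=
  (prod_fin_eq_prod_range f).symm

theorem chain_extendByConst {G : Type*} [Group G] {n : ℕ} {a : Fin n → G} {t : G}
    {l r : Fin n → ℤ} (h0 : 0 < n)
    (hrel : ∀ (i : Fin n) (h : (i : ℕ) + 1 < n), a i ^ l i = a ⟨(i : ℕ) + 1, h⟩ ^ r i)
    (hlast : a ⟨n - 1, by omega⟩ ^ l ⟨n - 1, by omega⟩ =
      t * a ⟨0, h0⟩ ^ r ⟨n - 1, by omega⟩ * t⁻¹) (i : ℕ) (hi : i < n) :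
    extendByConst a (t * a ⟨0, h0⟩ * t⁻¹) i ^ extendByConst l 1 i =
      extendByConst a (t * a ⟨0, h0⟩ * t⁻¹) (i + 1) ^ extendByConst r 1 i := by
  simp only [extendByConst, dif_pos hi]
  by_cases h : i + 1 < n
  · rw [dif_pos h]
    exact hrel ⟨i, hi⟩ h
  · obtain rfl : i = n - 1 := by omega
    rw [dif_neg h, conj_zpow]
    exact hlast

/-- Let `G` be the group presented by generators `a₁, …, a_n, t` (`n ≥ 2`) and relations
`a₁^{l₁} = a₂^{r₁}, …, a_{n-1}^{l_{n-1}} = a_n^{r_{n-1}}, a_n^{l_n} = t a₁^{r_n} t⁻¹`,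
where all `lᵢ, rᵢ` are nonzero and `L = l₁⋯l_n`, `R = r₁⋯r_n` are coprime.  Then `G` is
generated by `t` and `a₁`, the relation `t a₁^R t⁻¹ = a₁^L` holds, and hence `G` is
a quotient of `BS(R, L)`. -/
theorem circle_GBS_quotient_of_BS {G : Type} [Group G]
    (n : ℕ) (hn : 2 ≤ n) (a : Fin n → G) (t : G) (l r : Fin n → ℤ)
    (hcop : IsCoprime (∏ i, l i) (∏ i, r i))
    (hgen : Subgroup.closure (Set.range a ∪ {t}) = ⊤)
    (hrel : ∀ (i : Fin n) (h : (i : ℕ) + 1 < n),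
      a i ^ l i = a ⟨(i : ℕ) + 1, h⟩ ^ r i)
    (hlast : a ⟨n - 1, by omega⟩ ^ l ⟨n - 1, by omega⟩ =
      t * a ⟨0, by omega⟩ ^ r ⟨n - 1, by omega⟩ * t⁻¹) :
    Subgroup.closure ({t, a ⟨0, by omega⟩} : Set G) = ⊤ ∧
    t * a ⟨0, by omega⟩ ^ (∏ i, r i) * t⁻¹ = a ⟨0, by omega⟩ ^ (∏ i, l i) ∧
    ∃ f : BS (∏ i, r i) (∏ i, l i) →* G, Function.Surjective f := by
  have h0 : 0 < n := by omega
  -- the chain `a₁, …, a_n, t a₁ t⁻¹`, indexed from `0`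
  let b := extendByConst a (t * a ⟨0, h0⟩ * t⁻¹)
  have hchain : ∀ i < n, b i ^ extendByConst l 1 i = b (i + 1) ^ extendByConst r 1 i :=
    chain_extendByConst h0 hrel hlast
  have hb₀ : b 0 = a ⟨0, h0⟩ := dif_pos h0
  have hbn : b n = t * b 0 * t⁻¹ := by rw [hb₀]; exact dif_neg n.lt_irrefl
  rw [← prod_extendByConst l, ← prod_extendByConst r] at hcop ⊢
  have key := conj_zpow_prod_eq_of_chain hchain hbn
  rw [hb₀] at key
  have hcl : Subgroup.closure {t, a ⟨0, h0⟩} = ⊤ := by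
    rw [eq_top_iff, ← hgen, Subgroup.closure_le]
    rintro x (⟨i, rfl⟩ | rfl)
    · simpa only [hb₀, b, extendByConst, dif_pos i.isLt, Fin.eta, SetLike.mem_coe] using
        mem_closure_of_chain hchain hbn hcop i.isLt.le
    · exact Subgroup.subset_closure (by simp)
  exact ⟨hcl, key, BS.lift _ _ key, BS.lift_surjective key hcl⟩
end
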